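/- arXiv:1906.06824 — 2 statements merged into one kernel-verified Lean document; each statement's English description precedes it below -/
import Mathlib

section
/- Let V be a finite type and Q : Matrix V V ℕ. The following are equivalent: (i) there exists a permutation μ of V with P_μ * Q = Q * P_μ and Qᵀ = P_μ * Q (i.e., the opposite quiver Q^op is the twist of Q by an automorphism μ of Q); (ii) there exist a symmetric matrix H : Matrix (V ⊕ V) (V ⊕ V) ℕ (Hᵀ = H) and a permutation τ of V ⊕ V with P_τ * H = H * P_τ, such that Matrix.fromBlocks Q 0 0 Q = P_τ * H (i.e., the disjoint union Q ∪ Q is the twist of a graph by an automorphism, so that Q is a pretzelization of a graph). -/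
open Matrix

/-- The permutation matrix of a permutation `σ`: `(P_σ) i j = 1` if `j = σ i`, else `0`. -/
def permMat {V : Type*} [DecidableEq V] (R : Type*) [Zero R] [One R]
    (σ : Equiv.Perm V) : Matrix V V R :=
  Matrix.of fun i j => if j = σ i then 1 else 0

/-!
The transpose of a twist `P_τ H` of a graph by an automorphism is again a twist of it, namely
`P_τ⁻² (P_τ H)`. An identity `Mᵀ = P_σ M` says that `Mᵀ` has the rows of `M` up to order. For
`M = Q ∪ Q`, restricting every row to the first copy of `V` shows that the rows of `Qᵀ` and those
of `Q`, each family padded with `|V|` zero rows, agree up to order; cancelling the padding gives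
`Qᵀ = P_μ Q`, and such a `μ` automatically commutes with `Q`. Conversely, if `Qᵀ = P_μ Q` then
`Q ∪ Q` is the twist of the graph `[[0, Q], [Qᵀ, 0]]` by the automorphism that swaps the two
copies of `V`, applying `μ⁻¹` on the way from the first to the second.
-/

theorem exists_perm_comp_eq_of_card_fiber_eq {α γ : Type*} [Finite α] {f g : α → γ}
    (h : ∀ c, Nat.card {a // f a = c} = Nat.card {a // g a = c}) :
    ∃ σ : Equiv.Perm α, g ∘ σ = f :=
  ⟨Equiv.ofFiberEquiv fun c => (Finite.card_eq.mp (h c)).some,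
    funext (Equiv.ofFiberEquiv_map _)⟩

theorem exists_perm_comp_eq_of_sum_elim_comp_eq {α β γ : Type*} [Finite α] [Finite β]
    {f g : α → γ} {k : β → γ} (σ : Equiv.Perm (α ⊕ β)) (h : Sum.elim g k ∘ σ = Sum.elim f k) :
    ∃ μ : Equiv.Perm α, g ∘ μ = f := by
  refine exists_perm_comp_eq_of_card_fiber_eq fun c => ?_
  have hfiber : Nat.card {x // Sum.elim f k x = c} = Nat.card {x // Sum.elim g k x = c} := by
    rw [← h]
    exact Nat.card_congr (σ.subtypeEquiv fun _ => Iff.rfl)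
  rw [Nat.card_congr Equiv.subtypeSum, Nat.card_congr Equiv.subtypeSum, Nat.card_sum,
    Nat.card_sum] at hfiber
  exact Nat.add_right_cancel hfiber

section PermMat

variable {V n R : Type*} [DecidableEq V]

theorem permMat_eq_permMatrix [Zero R] [One R] (σ : Equiv.Perm V) :
    permMat R σ = σ.permMatrix R := by
  ext i j
  simp [permMat, PEquiv.toMatrix_apply, eq_comm]

variable [Fintype V] [NonAssocSemiring R]

theorem permMat_mul (σ : Equiv.Perm V) (M : Matrix V n R) :
    permMat R σ * M = M.submatrix σ id := by
  rw [permMat_eq_permMatrix]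
  exact PEquiv.toMatrix_toPEquiv_mul σ M

theorem mul_permMat (M : Matrix n V R) (σ : Equiv.Perm V) :
    M * permMat R σ = M.submatrix id σ.symm := by
  rw [permMat_eq_permMatrix]
  exact PEquiv.mul_toMatrix_toPEquiv M σ

theorem permMat_mul_comm_of_transpose_eq {Q : Matrix V V R} {μ : Equiv.Perm V}
    (hμ : Qᵀ = permMat R μ * Q) : permMat R μ * Q = Q * permMat R μ := by
  rw [permMat_mul] at hμ ⊢
  rw [mul_permMat]
  ext a b
  have ha := congr_fun₂ hμ a b
  have hb := congr_fun₂ hμ (μ.symm b) a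
  simp only [transpose_apply, submatrix_apply, id, Equiv.apply_symm_apply] at ha hb ⊢
  rw [← ha, hb]

theorem transpose_permMat_mul_of_isSymm {H : Matrix V V R} {τ : Equiv.Perm V}
    (hH : H.IsSymm) (hτ : permMat R τ * H = H * permMat R τ) :
    (permMat R τ * H)ᵀ = permMat R (τ ^ 2)⁻¹ * (permMat R τ * H) := by
  rw [permMat_mul, mul_permMat] at hτ
  rw [permMat_mul, permMat_mul]
  ext i j
  have hsymm := hH.apply i (τ j)
  have hcomm := congr_fun₂ hτ (τ⁻¹ i) (τ j)
  simp only [transpose_apply, submatrix_apply, id, pow_two, _root_.mul_inv_rev,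
    Equiv.Perm.coe_mul, Function.comp_apply, Equiv.Perm.coe_inv, Equiv.apply_symm_apply,
    Equiv.symm_apply_apply] at hcomm ⊢
  exact hsymm.trans hcomm

theorem exists_transpose_eq_permMat_mul_of_fromBlocks {Q : Matrix V V R}
    {σ : Equiv.Perm (V ⊕ V)}
    (hσ : (fromBlocks Q 0 0 Q)ᵀ = permMat R σ * fromBlocks Q 0 0 Q) :
    ∃ μ : Equiv.Perm V, Qᵀ = permMat R μ * Q := by
  rw [permMat_mul, fromBlocks_transpose, transpose_zero] at hσ
  have hleft : ∀ (M : Matrix V V R) i b,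
      fromBlocks M 0 0 M i (Sum.inl b) = Sum.elim M 0 i b := by
    rintro M (a | a) b <;> rfl
  have hrows : Sum.elim (Q : V → V → R) 0 ∘ σ = Sum.elim (Qᵀ : V → V → R) 0 := by
    funext i b
    calc Sum.elim (Q : V → V → R) 0 (σ i) b = fromBlocks Q 0 0 Q (σ i) (Sum.inl b) :=
          (hleft Q _ b).symm
      _ = fromBlocks Qᵀ 0 0 Qᵀ i (Sum.inl b) := (congr_fun₂ hσ i (Sum.inl b)).symm
      _ = Sum.elim (Qᵀ : V → V → R) 0 i b := hleft Qᵀ i b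
  obtain ⟨μ, hμ⟩ := exists_perm_comp_eq_of_sum_elim_comp_eq σ hrows
  exact ⟨μ, by rw [permMat_mul, ← hμ]; rfl⟩

theorem exists_symm_twist_fromBlocks_of_transpose_eq {Q : Matrix V V R} {μ : Equiv.Perm V}
    (hμ : Qᵀ = permMat R μ * Q) :
    ∃ (H : Matrix (V ⊕ V) (V ⊕ V) R) (τ : Equiv.Perm (V ⊕ V)),
      Hᵀ = H ∧ permMat R τ * H = H * permMat R τ ∧ fromBlocks Q 0 0 Q = permMat R τ * H := by
  rw [permMat_mul] at hμ
  have hQ : ∀ a b, Q a b = Q (μ b) a := fun a b => congr_fun₂ hμ b a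
  let τ : Equiv.Perm (V ⊕ V) :=
    (Equiv.sumComm V V).trans (Equiv.sumCongr (Equiv.refl V) μ.symm)
  have hτH : permMat R τ * fromBlocks 0 Q Qᵀ 0 = fromBlocks Q 0 0 Q := by
    rw [permMat_mul]
    ext (a | a) (b | b) <;> simp [τ, hQ b]
  have hHτ : fromBlocks 0 Q Qᵀ 0 * permMat R τ = fromBlocks Q 0 0 Q := by
    rw [mul_permMat]
    ext (a | a) (b | b) <;> simp [τ, hQ a]
  exact ⟨fromBlocks 0 Q Qᵀ 0, τ, by simp [fromBlocks_transpose], hτH.trans hHτ.symm, hτH.symm⟩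

end PermMat

/-- A quiver `Q` satisfies `Q^op = ^μQ` for some automorphism `μ` of `Q` if and only if
the disjoint union `Q ∪ Q` is a twist of a graph (symmetric quiver) by an automorphism,
i.e. `Q` is a pretzelization of a graph. -/
theorem pretzelization_iff_twist_of_opposite
    {V : Type*} [Fintype V] [DecidableEq V] (Q : Matrix V V ℕ) :
    (∃ μ : Equiv.Perm V, permMat ℕ μ * Q = Q * permMat ℕ μ ∧ Qᵀ = permMat ℕ μ * Q) ↔
      (∃ (H : Matrix (V ⊕ V) (V ⊕ V) ℕ) (τ : Equiv.Perm (V ⊕ V)),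
        Hᵀ = H ∧ permMat ℕ τ * H = H * permMat ℕ τ ∧
        Matrix.fromBlocks Q 0 0 Q = permMat ℕ τ * H) := by
  constructor
  · rintro ⟨μ, -, hμ⟩
    exact exists_symm_twist_fromBlocks_of_transpose_eq hμ
  · rintro ⟨H, τ, hH, hτ, hQ⟩
    have hσ := transpose_permMat_mul_of_isSymm hH hτ
    rw [← hQ] at hσ
    obtain ⟨μ, hμ⟩ := exists_transpose_eq_permMat_mul_of_fromBlocks hσ
    exact ⟨μ, permMat_mul_comm_of_transpose_eq hμ, hμ⟩
end

section
/- Let n ≥ 2 and let Q : Matrix (Fin (n+1)) (Fin (n+1)) ℂ be the adjacency matrix of the graph DL̃_n: Q i j = 1 (and Q j i = 1) exactly when the unordered pair {i, j} (of natural-number values) is {0, 2}, {1, 2}, or {k, k+1} for some 2 ≤ k ≤ n−1; Q n n = 1 (a loop at vertex n); and all other entries are 0. Then spectralRadius ℂ Q = 2. -/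
/-!
The vector `(1, 1, 2, …, 2)` is a positive eigenvector of the adjacency matrix of `DL̃_n` for the
eigenvalue `2`. For a nonnegative matrix `A` with a positive eigenvector `v`, `A v = r v`, the
eigenvalue `r` is the spectral radius: it lies in the spectrum, and any eigenvalue `μ` with
eigenvector `x` satisfies `|μ| ≤ r`, as one sees at a coordinate where `|x i| / v i` is maximal.
-/

open Matrix Finset
open scoped NNReal ENNReal

namespace Matrix

variable {ι 𝕜 : Type*} [Fintype ι] [DecidableEq ι]

theorem mem_spectrum_iff_exists_mulVec_eq_smul [Field 𝕜] {A : Matrix ι ι 𝕜} {μ : 𝕜} :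
    μ ∈ spectrum 𝕜 A ↔ ∃ x ≠ 0, A *ᵥ x = μ • x := by
  rw [← spectrum_toLin', ← Module.End.hasEigenvalue_iff_mem_spectrum]
  constructor
  · intro h
    obtain ⟨x, hx⟩ := h.exists_hasEigenvector
    exact ⟨x, hx.2, by simpa using hx.apply_eq_smul⟩
  · rintro ⟨x, hx, hAx⟩
    exact Module.End.hasEigenvalue_of_hasEigenvector
      ⟨Module.End.mem_eigenspace_iff.2 (by simpa using hAx), hx⟩

theorem norm_le_of_mem_spectrum_of_sum_norm_mul_le [NormedField 𝕜] {A : Matrix ι ι 𝕜}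
    {v : ι → ℝ} (hv : ∀ i, 0 < v i) {r : ℝ} (hA : ∀ i, ∑ j, ‖A i j‖ * v j ≤ r * v i)
    {μ : 𝕜} (hμ : μ ∈ spectrum 𝕜 A) : ‖μ‖ ≤ r := by
  obtain ⟨x, hx, hAx⟩ := mem_spectrum_iff_exists_mulVec_eq_smul.1 hμ
  obtain ⟨k, hk⟩ := Function.ne_iff.1 hx
  -- `x` is dominated by a multiple of `v`, with equality at `i`.
  obtain ⟨i, -, hi⟩ := exists_max_image univ (fun j => ‖x j‖ / v j) ⟨k, mem_univ k⟩
  have hxi : 0 < ‖x i‖ := by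
    have := (div_pos (norm_pos_iff.2 hk) (hv k)).trans_le (hi k (mem_univ k))
    exact (div_pos_iff_of_pos_right (hv i)).1 this
  have hx_le : ∀ j, ‖x j‖ ≤ ‖x i‖ / v i * v j := fun j =>
    (div_le_iff₀ (hv j)).1 (hi j (mem_univ j))
  refine le_of_mul_le_mul_right ?_ hxi
  calc ‖μ‖ * ‖x i‖ = ‖∑ j, A i j * x j‖ := by
        rw [← norm_mul, ← smul_eq_mul, ← Pi.smul_apply, ← hAx]; rfl
    _ ≤ ∑ j, ‖A i j‖ * (‖x i‖ / v i * v j) :=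
        (norm_sum_le _ _).trans <| sum_le_sum fun j _ => by
          rw [norm_mul]; exact mul_le_mul_of_nonneg_left (hx_le j) (norm_nonneg _)
    _ = ‖x i‖ / v i * ∑ j, ‖A i j‖ * v j := by
        rw [mul_sum]; exact sum_congr rfl fun j _ => by ring
    _ ≤ ‖x i‖ / v i * (r * v i) :=
        mul_le_mul_of_nonneg_left (hA i) (div_nonneg hxi.le (hv i).le)
    _ = r * ‖x i‖ := by field_simp [(hv i).ne']

theorem spectralRadius_map_eq_of_mulVec_eq_smul [RCLike 𝕜] [Nonempty ι] {A : Matrix ι ι ℝ}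
    (hA : ∀ i j, 0 ≤ A i j) {v : ι → ℝ} (hv : ∀ i, 0 < v i) {r : ℝ≥0}
    (hAv : A *ᵥ v = (r : ℝ) • v) :
    spectralRadius 𝕜 (A.map (algebraMap ℝ 𝕜)) = r := by
  refine le_antisymm (iSup₂_le fun μ hμ => ENNReal.coe_le_coe.2 ?_) ?_
  · refine norm_le_of_mem_spectrum_of_sum_norm_mul_le hv (fun i => ?_) hμ
    have := congrFun hAv i
    simp only [mulVec, dotProduct, Pi.smul_apply, smul_eq_mul] at this
    simp [map_apply, abs_of_nonneg (hA _ _), this]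
  · have hr : ((r : ℝ) : 𝕜) ∈ spectrum 𝕜 (A.map (algebraMap ℝ 𝕜)) := by
      refine mem_spectrum_iff_exists_mulVec_eq_smul.2
        ⟨algebraMap ℝ 𝕜 ∘ v, fun h => (hv (Classical.arbitrary ι)).ne' ?_, ?_⟩
      · simpa using congrFun h (Classical.arbitrary ι)
      · ext i
        rw [← RingHom.map_mulVec, hAv]
        simp
    calc (r : ℝ≥0∞) = ‖((r : ℝ) : 𝕜)‖₊ := by simp
      _ ≤ spectralRadius 𝕜 (A.map (algebraMap ℝ 𝕜)) :=
        le_iSup₂ (f := fun μ _ => (‖μ‖₊ : ℝ≥0∞)) _ hr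

end Matrix

-- Indexed by `ℕ` so that row sums become sums over `range (n + 1)`.
def dlTildeAdjEntry (n a b : ℕ) : ℝ :=
  if (a = 0 ∧ b = 2) ∨ (b = 0 ∧ a = 2) ∨ (a = 1 ∧ b = 2) ∨ (b = 1 ∧ a = 2) ∨
      (2 ≤ a ∧ b = a + 1) ∨ (2 ≤ b ∧ a = b + 1) ∨ (a = b ∧ a = n) then 1 else 0

def dlTildeWeight (k : ℕ) : ℝ := if k ≤ 1 then 1 else 2

theorem dlTildeAdjEntry_nonneg (n a b : ℕ) : 0 ≤ dlTildeAdjEntry n a b := by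
  unfold dlTildeAdjEntry; split_ifs <;> norm_num

theorem dlTildeWeight_pos (k : ℕ) : 0 < dlTildeWeight k := by
  unfold dlTildeWeight; split_ifs <;> norm_num

theorem sum_dlTildeAdjEntry_mul_weight {n a : ℕ} (hn : 2 ≤ n) (ha : a ≤ n) :
    ∑ k ∈ range (n + 1), dlTildeAdjEntry n a k * dlTildeWeight k = 2 * dlTildeWeight a := by
  simp only [dlTildeAdjEntry, boole_mul, ← sum_filter]
  rcases (by omega : a ≤ 1 ∨ a = 2 ∧ a = n ∨ a = 2 ∧ a < n ∨ 2 < a ∧ a < n ∨ 2 < a ∧ a = n)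
    with h | h | h | h | h
  · rw [show {k ∈ range (n + 1) | _} = {2} by ext k; simp; omega]
    simp [dlTildeWeight, h]
  · rw [show {k ∈ range (n + 1) | _} = {0, 1, 2} by ext k; simp; omega]
    norm_num [dlTildeWeight, h]
  · rw [show {k ∈ range (n + 1) | _} = {0, 1, 3} by ext k; simp; omega]
    norm_num [dlTildeWeight, h]
  · rw [show {k ∈ range (n + 1) | _} = {a - 1, a + 1} by ext k; simp; omega, sum_pair (by omega)]
    norm_num [dlTildeWeight, show ¬ a - 1 ≤ 1 by omega, show ¬ a + 1 ≤ 1 by omega,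
      show ¬ a ≤ 1 by omega]
  · rw [show {k ∈ range (n + 1) | _} = {a - 1, a} by ext k; simp; omega, sum_pair (by omega)]
    norm_num [dlTildeWeight, show ¬ a - 1 ≤ 1 by omega, show ¬ a ≤ 1 by omega]

def dlTildeAdj (n : ℕ) : Matrix (Fin (n + 1)) (Fin (n + 1)) ℝ :=
  of fun i j => dlTildeAdjEntry n i j

theorem dlTildeAdj_mulVec_weight {n : ℕ} (hn : 2 ≤ n) :
    dlTildeAdj n *ᵥ (fun j => dlTildeWeight j) =
      (2 : ℝ) • fun j : Fin (n + 1) => dlTildeWeight j := by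
  ext i
  simpa [mulVec, dotProduct, dlTildeAdj, Fin.sum_univ_eq_sum_range
    (fun k => dlTildeAdjEntry n i k * dlTildeWeight k)] using
    sum_dlTildeAdjEntry_mul_weight hn (Fin.is_le i)

/-- The adjacency matrix of the graph `DL̃_n` (for `n ≥ 2`) has spectral radius `2`.
The graph `DL̃_n` has vertices `0, 1, …, n`, with vertices `0` and `1` each joined by an
edge to vertex `2`, edges between consecutive vertices `k` and `k + 1` for
`2 ≤ k ≤ n - 1`, and a loop at vertex `n`. -/
theorem spectralRadius_DLtilde_eq_two
    (n : ℕ) (hn : 2 ≤ n)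
    (Q : Matrix (Fin (n + 1)) (Fin (n + 1)) ℂ)
    (hQ : ∀ i j : Fin (n + 1), Q i j =
      if (i.val = 0 ∧ j.val = 2) ∨ (j.val = 0 ∧ i.val = 2) ∨
         (i.val = 1 ∧ j.val = 2) ∨ (j.val = 1 ∧ i.val = 2) ∨
         (2 ≤ i.val ∧ j.val = i.val + 1) ∨ (2 ≤ j.val ∧ i.val = j.val + 1) ∨
         (i = j ∧ i.val = n)
      then 1 else 0) :
    spectralRadius ℂ Q = 2 := by
  have hQ_eq : Q = (dlTildeAdj n).map (algebraMap ℝ ℂ) := by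
    ext i j
    simp only [hQ, dlTildeAdj, dlTildeAdjEntry, Fin.ext_iff, map_apply, of_apply]
    split_ifs <;> simp
  rw [hQ_eq]
  exact_mod_cast spectralRadius_map_eq_of_mulVec_eq_smul (A := dlTildeAdj n) (r := 2)
    (fun i j => dlTildeAdjEntry_nonneg n i j) (fun j => dlTildeWeight_pos j)
    (by rw [NNReal.coe_ofNat]; exact dlTildeAdj_mulVec_weight hn)
end
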